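/- arXiv:1808.07593 — 3 statements merged into one kernel-verified Lean document; each statement's English description precedes it below -/
import Mathlib

section
/- Let Z be a random variable (continuous or discrete) and Y a random variable with finite outcome set 𝒴. Let p_{ZY} and p̃_{ZY} be two joint distributions of (Z,Y) that have the same marginal over Z, p(z) = p̃(z), and satisfy |p_{ZY} − p̃_{ZY}|₁ ≤ ε ≤ 1/2. Then |I_p(Z;Y) − I_p̃(Z;Y)| ≤ −2ε·log(ε/|𝒴|²). -/
noncomputable section

/-- `p` is a joint probability distribution on the finite product `A × B`. -/
def IsJoint {A B : Type*} [Fintype A] [Fintype B] (p : A → B → ℝ) : Prop :=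
  (∀ a b, 0 ≤ p a b) ∧ (∑ a, ∑ b, p a b) = 1

/-- `κ` is a channel (conditional distribution) from `A` to the finite type `B`. -/
def IsChannel {A B : Type*} [Fintype B] (κ : A → B → ℝ) : Prop :=
  ∀ a, (∀ b, 0 ≤ κ a b) ∧ (∑ b, κ a b) = 1

/-- Marginal distribution of the first coordinate. -/
def margFst {A B : Type*} [Fintype B] (p : A → B → ℝ) : A → ℝ := fun a => ∑ b, p a b

/-- Marginal distribution of the second coordinate. -/
def margSnd {A B : Type*} [Fintype A] (p : A → B → ℝ) : B → ℝ := fun b => ∑ a, p a b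

/-- ℓ1 distance between two joint distributions. -/
def l1 {A B : Type*} [Fintype A] [Fintype B] (p q : A → B → ℝ) : ℝ :=
  ∑ a, ∑ b, |p a b - q a b|

/-- Shannon entropy of a distribution on a finite type. -/
def ent {A : Type*} [Fintype A] (q : A → ℝ) : ℝ := -∑ a, q a * Real.log (q a)

/-- Conditional entropy `H(B | A)` of the second coordinate given the first. -/
def condEnt {A B : Type*} [Fintype A] [Fintype B] (p : A → B → ℝ) : ℝ :=
  -∑ a, ∑ b, p a b * Real.log (p a b / margFst p a)

/-- Mutual information `I(A;B)` of a joint distribution, as `H(B) - H(B|A)`. -/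
def mi {A B : Type*} [Fintype A] [Fintype B] (p : A → B → ℝ) : ℝ :=
  ent (margSnd p) - condEnt p

/-!
Write `η t = -t log t` and `m = |𝒴|`. Since `I(Z;Y) = H(Y) - H(Y|Z)`, it suffices to show that
each of the two terms moves by at most `-ε log (ε / 2m)`, which for `m ≥ 2` is at most half of
the claimed bound. On `[0, 1]`, `|η a - η b| ≤ η |a - b| + |a - b| log 2`; summing over `𝒴`
and applying Jensen to the concave `η` bounds the entropy change by `η σ + σ log (2m)`, where
`σ` is the ℓ1 distance. Because the two joints share the marginal `p(z)`, writing
`H(Y|Z) = ∑_z p(z) H(Y|Z=z)` compares conditional entropies with the same weights, and Jensen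
applied once more, now to the concave bound `σ ↦ η σ + σ log (2m)`, collapses the weighted
conditional distances into the joint ℓ1 distance. For `m = 1` the equal marginals force the two
joints to coincide.
-/

open Real Finset

section NegMulLog

variable {s t x : ℝ}

lemma negMulLog_add_le (hx : 0 ≤ x) (ht : 0 ≤ t) :
    negMulLog (x + t) ≤ negMulLog x + negMulLog t := by
  have mul_log_le : ∀ {a : ℝ}, 0 ≤ a → a ≤ x + t → a * log a ≤ a * log (x + t) := by
    intro a ha hle
    rcases ha.eq_or_lt with rfl | ha
    · simp
    · exact mul_le_mul_of_nonneg_left (log_le_log ha hle) ha.le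
  simp only [negMulLog, neg_mul]
  nlinarith [mul_log_le hx (by linarith), mul_log_le ht (by linarith)]

lemma negMulLog_sub_negMulLog_le (hs : 0 ≤ s) (hst : s ≤ t) (ht : t ≤ 1) :
    negMulLog s - negMulLog t ≤ t - s := by
  rcases hs.eq_or_lt with rfl | hs
  · simp only [negMulLog_zero, zero_sub, sub_zero]
    linarith [negMulLog_nonneg hst ht]
  · -- t log t - s log s = (t - s) log t + s log (t / s), and log (t / s) ≤ t / s - 1
    have hlog : s * (log t - log s) ≤ t - s := by
      rw [← log_div (by linarith) hs.ne']
      calc s * log (t / s) ≤ s * (t / s - 1) :=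
            mul_le_mul_of_nonneg_left (log_le_sub_one_of_pos (div_pos (by linarith) hs)) hs.le
        _ = t - s := by field_simp
    have : (t - s) * log t ≤ 0 :=
      mul_nonpos_of_nonneg_of_nonpos (by linarith) (log_nonpos (by linarith) ht)
    simp only [negMulLog, neg_mul]
    nlinarith

lemma negMulLog_le_exp_neg_one (hx : 0 ≤ x) : negMulLog x ≤ exp (-1) := by
  rcases hx.eq_or_lt with rfl | hx
  · simpa using (exp_pos (-1)).le
  · simpa [negMulLog, exp_log hx, mul_comm] using mul_exp_neg_le_exp_neg_one (-log x)

lemma negMulLog_sub_negMulLog_add_le (hx : 0 ≤ x) (ht : 0 ≤ t) (hxt : x + t ≤ 1) :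
    negMulLog x - negMulLog (x + t) ≤ negMulLog t + t * log 2 := by
  -- below `t = 2 / e` already `t ≤ η t + t log 2`; above it, `η x ≤ 1 / e ≤ t log 2`
  rcases le_or_gt t (2 * exp (-1)) with hsmall | hlarge
  · have hslope := negMulLog_sub_negMulLog_le hx (by linarith) hxt
    suffices t ≤ negMulLog t + t * log 2 by linarith
    rcases ht.eq_or_lt with rfl | ht
    · simp
    · have : log t + 1 ≤ log 2 := by simpa [log_mul, log_exp] using log_le_log ht hsmall
      simp only [negMulLog, neg_mul]
      nlinarith
  · have : exp (-1) ≤ t * log 2 :=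
      calc exp (-1) ≤ exp (-1) * (2 * log 2) :=
            le_mul_of_one_le_right (exp_pos _).le (by linarith [log_two_gt_d9])
        _ = 2 * exp (-1) * log 2 := by ring
        _ ≤ t * log 2 := by gcongr
    linarith [negMulLog_le_exp_neg_one hx, negMulLog_nonneg (by linarith : 0 ≤ x + t) hxt,
      negMulLog_nonneg ht (by linarith)]

lemma abs_negMulLog_sub_negMulLog_le {a b : ℝ} (ha : a ∈ Set.Icc 0 1)
    (hb : b ∈ Set.Icc 0 1) :
    |negMulLog a - negMulLog b| ≤ negMulLog |a - b| + |a - b| * log 2 := by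
  wlog hab : a ≤ b generalizing a b
  · rw [abs_sub_comm, abs_sub_comm a]
    exact this hb ha (by linarith)
  obtain ⟨t, ht, rfl⟩ : ∃ t, 0 ≤ t ∧ b = a + t := ⟨b - a, by linarith, by ring⟩
  rw [show a - (a + t) = -t by ring, abs_neg, abs_of_nonneg ht, abs_le]
  constructor
  · linarith [negMulLog_add_le ha.1 ht, mul_nonneg ht (log_nonneg one_le_two)]
  · exact negMulLog_sub_negMulLog_add_le ha.1 ht hb.2

end NegMulLog

lemma sum_negMulLog_le {ι : Type*} [Fintype ι] [Nonempty ι] {u : ι → ℝ} (hu : ∀ i, 0 ≤ u i) :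
    ∑ i, negMulLog (u i) ≤ negMulLog (∑ i, u i) + (∑ i, u i) * log (Fintype.card ι) := by
  set m : ℝ := (Fintype.card ι : ℝ)
  set σ := ∑ i, u i
  have hm : 0 < m := by simpa [m] using Fintype.card_pos
  have jensen : m⁻¹ * ∑ i, negMulLog (u i) ≤ negMulLog (m⁻¹ * σ) := by
    simpa only [smul_eq_mul, ← mul_sum] using concaveOn_negMulLog.le_map_sum (t := univ)
      (w := fun _ => m⁻¹) (p := u) (fun _ _ => by positivity) (by simp [m, hm.ne'])
      (fun i _ => hu i)
  have hscale : m * negMulLog (m⁻¹ * σ) = negMulLog σ + σ * log m := by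
    have := negMulLog_mul (m⁻¹ * σ) m
    rw [show m⁻¹ * σ * m = σ by field_simp] at this
    rw [this, show negMulLog m = -m * log m from rfl]
    field_simp
    ring
  calc ∑ i, negMulLog (u i) = m * (m⁻¹ * ∑ i, negMulLog (u i)) := by field_simp
    _ ≤ m * negMulLog (m⁻¹ * σ) := by gcongr
    _ = negMulLog σ + σ * log m := hscale

/-- `t ↦ -t log (t / 2m)`: bounds how far apart the entropies of two distributions on an
alphabet of size `m` can be, in terms of their ℓ1 distance `t`. -/
def entropyModulus (m t : ℝ) : ℝ := negMulLog t + t * log (2 * m)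

lemma concaveOn_entropyModulus (m : ℝ) : ConcaveOn ℝ (Set.Ici 0) (entropyModulus m) :=
  concaveOn_negMulLog.add ((LinearMap.id.smulRight (log (2 * m))).concaveOn (convex_Ici 0))

lemma monotoneOn_entropyModulus {m : ℝ} (hm : 2 ≤ m) :
    MonotoneOn (entropyModulus m) (Set.Icc 0 1) := by
  intro s hs t ht hst
  have hslope := negMulLog_sub_negMulLog_le hs.1 hst ht.2
  have hlog : 1 ≤ log (2 * m) := by
    rw [log_mul two_ne_zero (by linarith)]
    linarith [log_le_log two_pos hm, log_two_gt_d9]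
  simp only [entropyModulus]
  nlinarith

lemma two_mul_entropyModulus_le {m ε : ℝ} (hm : 2 ≤ m) (hε : 0 ≤ ε) :
    2 * entropyModulus m ε ≤ -(2 * ε) * log (ε / m ^ 2) := by
  rcases hε.eq_or_lt with rfl | hε
  · simp [entropyModulus]
  have hlog : log 2 ≤ log m := log_le_log two_pos hm
  rw [log_div hε.ne' (by positivity), log_pow, entropyModulus, negMulLog,
    log_mul two_ne_zero (by linarith)]
  push_cast
  nlinarith

lemma ent_eq_sum_negMulLog {ι : Type*} [Fintype ι] (q : ι → ℝ) :
    ent q = ∑ i, negMulLog (q i) := by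
  simp [ent, negMulLog]

lemma abs_ent_sub_ent_le {ι : Type*} [Fintype ι] [Nonempty ι] {a b : ι → ℝ}
    (ha : ∀ i, a i ∈ Set.Icc 0 1) (hb : ∀ i, b i ∈ Set.Icc 0 1) :
    |ent a - ent b| ≤ entropyModulus (Fintype.card ι) (∑ i, |a i - b i|) := by
  set σ := ∑ i, |a i - b i|
  have hm : (0 : ℝ) < Fintype.card ι := by exact_mod_cast Fintype.card_pos
  calc |ent a - ent b| = |∑ i, (negMulLog (a i) - negMulLog (b i))| := by
        rw [ent_eq_sum_negMulLog, ent_eq_sum_negMulLog, sum_sub_distrib]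
    _ ≤ ∑ i, (negMulLog |a i - b i| + |a i - b i| * log 2) :=
        (abs_sum_le_sum_abs _ _).trans
          (sum_le_sum fun i _ => abs_negMulLog_sub_negMulLog_le (ha i) (hb i))
    _ = ∑ i, negMulLog |a i - b i| + σ * log 2 := by rw [sum_add_distrib, sum_mul]
    _ ≤ negMulLog σ + σ * log (Fintype.card ι) + σ * log 2 := by
        gcongr
        exact sum_negMulLog_le fun i => abs_nonneg _
    _ = entropyModulus (Fintype.card ι) σ := by
        rw [entropyModulus, log_mul two_ne_zero hm.ne']
        ring

section Joint

variable {A B : Type*} [Fintype B]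

lemma div_margFst_mem_Icc {p : A → B → ℝ} (hp : ∀ a b, 0 ≤ p a b) (a : A) (b : B) :
    p a b / margFst p a ∈ Set.Icc 0 1 :=
  ⟨div_nonneg (hp a b) (sum_nonneg fun b _ => hp a b),
    div_le_one_of_le₀ (single_le_sum (fun b _ => hp a b) (mem_univ b))
      (sum_nonneg fun b _ => hp a b)⟩

lemma margFst_mul_sum_abs_div_sub_div {p q : A → B → ℝ} (hp : ∀ a b, 0 ≤ p a b)
    (hq : ∀ a b, 0 ≤ q a b) (hmarg : ∀ a, margFst p a = margFst q a) (a : A) :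
    margFst p a * ∑ b, |p a b / margFst p a - q a b / margFst p a| = ∑ b, |p a b - q a b| := by
  rcases eq_or_ne (margFst p a) 0 with h | h
  · have hp0 := (sum_eq_zero_iff_of_nonneg fun b _ => hp a b).1 h
    have hq0 := (sum_eq_zero_iff_of_nonneg fun b _ => hq a b).1 (hmarg a ▸ h)
    simp [h, hp0 _ (mem_univ _), hq0 _ (mem_univ _)]
  · have hpos : 0 < margFst p a := (sum_nonneg fun b _ => hp a b).lt_of_ne' h
    rw [mul_sum]
    refine sum_congr rfl fun b _ => ?_
    rw [div_sub_div_same, abs_div, abs_of_pos hpos, mul_div_cancel₀ _ h]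

lemma eq_of_margFst_eq [Subsingleton B] {p q : A → B → ℝ}
    (h : ∀ a, margFst p a = margFst q a) : p = q := by
  funext a b
  simpa [margFst, Fintype.sum_subsingleton _ b] using h a

variable [Fintype A]

lemma l1_nonneg (p q : A → B → ℝ) : 0 ≤ l1 p q :=
  sum_nonneg fun _ _ => sum_nonneg fun _ _ => abs_nonneg _

lemma sum_abs_margSnd_sub_le_l1 (p q : A → B → ℝ) :
    ∑ b, |margSnd p b - margSnd q b| ≤ l1 p q := by
  rw [l1, sum_comm]
  refine sum_le_sum fun b _ => ?_
  rw [margSnd, margSnd, ← sum_sub_distrib]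
  exact abs_sum_le_sum_abs _ _

lemma margSnd_mem_Icc {p : A → B → ℝ} (hp : IsJoint p) (b : B) :
    margSnd p b ∈ Set.Icc 0 1 := by
  have hnonneg : ∀ b, 0 ≤ margSnd p b := fun b => sum_nonneg fun a _ => hp.1 a b
  refine ⟨hnonneg b, ?_⟩
  calc margSnd p b ≤ ∑ b, margSnd p b := single_le_sum (fun b _ => hnonneg b) (mem_univ b)
    _ = 1 := by rw [← hp.2, sum_comm]; rfl

lemma condEnt_eq_sum_mul_ent (p : A → B → ℝ) :
    condEnt p = ∑ a, margFst p a * ent (fun b => p a b / margFst p a) := by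
  simp only [condEnt, ent, mul_neg, mul_sum, ← sum_neg_distrib]
  refine sum_congr rfl fun a _ => sum_congr rfl fun b _ => ?_
  -- a row with `margFst p a = 0` gives `0` on both sides, as `x / 0 = 0` and `log 0 = 0`
  rcases eq_or_ne (margFst p a) 0 with h | h
  · simp [h]
  · field_simp

variable [Nontrivial B]

lemma abs_ent_margSnd_sub_le {p q : A → B → ℝ} (hp : IsJoint p) (hq : IsJoint q) {ε : ℝ}
    (hl1 : l1 p q ≤ ε) (hε : ε ≤ 1) :
    |ent (margSnd p) - ent (margSnd q)| ≤ entropyModulus (Fintype.card B) ε := by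
  have hm : (2 : ℝ) ≤ Fintype.card B := by exact_mod_cast Fintype.one_lt_card
  have hσ := (sum_abs_margSnd_sub_le_l1 p q).trans hl1
  exact (abs_ent_sub_ent_le (margSnd_mem_Icc hp) (margSnd_mem_Icc hq)).trans <|
    monotoneOn_entropyModulus hm ⟨sum_nonneg fun _ _ => abs_nonneg _, hσ.trans hε⟩
      ⟨(l1_nonneg p q).trans hl1, hε⟩ hσ

lemma abs_condEnt_sub_le {p q : A → B → ℝ} (hp : IsJoint p) (hq : ∀ a b, 0 ≤ q a b)
    (hmarg : ∀ a, margFst p a = margFst q a) {ε : ℝ} (hl1 : l1 p q ≤ ε) (hε : ε ≤ 1) :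
    |condEnt p - condEnt q| ≤ entropyModulus (Fintype.card B) ε := by
  set w := margFst p
  set M := entropyModulus (Fintype.card B)
  set U : A → ℝ := fun a => ∑ b, |p a b / w a - q a b / w a|
  have hm : (2 : ℝ) ≤ Fintype.card B := by exact_mod_cast Fintype.one_lt_card
  have hw : ∀ a, 0 ≤ w a := fun a => sum_nonneg fun b _ => hp.1 a b
  have hrow : ∀ a, |ent (fun b => p a b / w a) - ent (fun b => q a b / w a)| ≤ M (U a) :=
    fun a => abs_ent_sub_ent_le (div_margFst_mem_Icc hp.1 a)
      (by simpa only [w, hmarg] using div_margFst_mem_Icc hq a)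
  have hU : ∑ a, w a * U a = l1 p q :=
    sum_congr rfl fun a _ => margFst_mul_sum_abs_div_sub_div hp.1 hq hmarg a
  rw [condEnt_eq_sum_mul_ent p, condEnt_eq_sum_mul_ent q, ← show w = margFst q from funext hmarg]
  calc |∑ a, w a * ent (fun b => p a b / w a) - ∑ a, w a * ent (fun b => q a b / w a)|
      ≤ ∑ a, w a * |ent (fun b => p a b / w a) - ent (fun b => q a b / w a)| := by
        rw [← sum_sub_distrib]
        refine (abs_sum_le_sum_abs _ _).trans_eq (sum_congr rfl fun a _ => ?_)
        rw [← mul_sub, abs_mul, abs_of_nonneg (hw a)]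
    _ ≤ ∑ a, w a * M (U a) := by gcongr with a; exacts [hw a, hrow a]
    _ ≤ M (∑ a, w a * U a) := by
        simpa only [smul_eq_mul] using (concaveOn_entropyModulus _).le_map_sum
          (fun a _ => hw a) hp.2 (fun a _ => Set.mem_Ici.2 (sum_nonneg fun _ _ => abs_nonneg _))
    _ = M (l1 p q) := by rw [hU]
    _ ≤ M ε := monotoneOn_entropyModulus hm ⟨l1_nonneg p q, hl1.trans hε⟩
        ⟨(l1_nonneg p q).trans hl1, hε⟩ hl1

end Joint

/-- If two joint distributions of `(Z,Y)` (with `Y` finite) share the same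
marginal over `Z` and are within ℓ1 distance `ε ≤ 1/2`, then their mutual informations
`I(Z;Y)` differ by at most `-2ε log (ε / |𝒴|²)`. -/
theorem mutual_information_l1_bound {Z Y : Type*} [Fintype Z] [Fintype Y]
    (p ptilde : Z → Y → ℝ) (ε : ℝ)
    (hp : IsJoint p) (hptilde : IsJoint ptilde)
    (hmarg : ∀ z, margFst p z = margFst ptilde z)
    (hl1 : l1 p ptilde ≤ ε) (hε : ε ≤ 1/2) :
    |mi p - mi ptilde| ≤ -(2*ε) * Real.log (ε / (Fintype.card Y : ℝ)^2) := by
  have hε0 : 0 ≤ ε := (l1_nonneg p ptilde).trans hl1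
  rcases subsingleton_or_nontrivial Y with hY | hY
  · rw [eq_of_margFst_eq hmarg, sub_self, abs_zero]
    have hx : ε / (Fintype.card Y : ℝ) ^ 2 ≤ 1 := by
      rcases Nat.le_one_iff_eq_zero_or_eq_one.1 (Fintype.card_le_one_iff_subsingleton.2 hY)
        with h | h <;> simp [h]
      linarith
    nlinarith [log_nonpos (by positivity) hx]
  · have hm : (2 : ℝ) ≤ Fintype.card Y := by exact_mod_cast Fintype.one_lt_card
    calc |mi p - mi ptilde|
        ≤ |ent (margSnd p) - ent (margSnd ptilde)| + |condEnt p - condEnt ptilde| := by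
          rw [mi, mi, sub_sub_sub_comm]
          exact abs_sub _ _
      _ ≤ entropyModulus (Fintype.card Y) ε + entropyModulus (Fintype.card Y) ε :=
          add_le_add (abs_ent_margSnd_sub_le hp hptilde hl1 (by linarith))
            (abs_condEnt_sub_le hp hptilde.1 hmarg hl1 (by linarith))
      _ ≤ -(2*ε) * Real.log (ε / (Fintype.card Y : ℝ)^2) := by
          rw [← two_mul]
          exact two_mul_entropyModulus_le hm hε0
end
end

section
/- Let X be a random variable (continuous or discrete), Y a random variable with finite outcome set 𝒴, and suppose Y = f(X) for a single-valued function f under the joint distribution p. Then the IB curve of p satisfies F(r) = min(r, H(Y)) for all r ≥ 0; in particular F is piecewise linear (and hence not strictly concave). -/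
noncomputable section

/-- Joint distribution of `(X,T)` when `T` is generated from `X` via channel `κ`
(so that the Markov condition `Y - X - T` holds). -/
def jointXT {X Y T : Type*} [Fintype Y] (p : X → Y → ℝ) (κ : X → T → ℝ) : X → T → ℝ :=
  fun x t => (∑ y, p x y) * κ x t

/-- Joint distribution of `(T,Y)` when `T` is generated from `X` via channel `κ`. -/
def jointTY {X Y T : Type*} [Fintype X] (p : X → Y → ℝ) (κ : X → T → ℝ) : T → Y → ℝ :=
  fun t y => ∑ x, p x y * κ x t

/-- Joint distribution of `(Y,T)` when `T` is generated from `X` via channel `κ`. -/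
def jointYT {X Y T : Type*} [Fintype X] (p : X → Y → ℝ) (κ : X → T → ℝ) : Y → T → ℝ :=
  fun y t => ∑ x, p x y * κ x t

/-- The information-bottleneck curve `F(r)`: the supremum of `I(Y;T)` over all (discrete)
bottleneck variables `T` obeying the Markov condition `Y - X - T` with `I(X;T) ≤ r`. -/
def IBcurve {X Y : Type*} [Fintype X] [Fintype Y] (p : X → Y → ℝ) (r : ℝ) : ℝ :=
  sSup { v : ℝ | ∃ (n : ℕ) (κ : X → Fin n → ℝ), IsChannel κ ∧
    mi (jointXT p κ) ≤ r ∧ v = mi (jointTY p κ) }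

/-- `Y` is the deterministic function `f` of `X` under the joint distribution `p`:
given `X = x`, all conditional mass is on `f x`. -/
def Determ {X Y : Type*} (p : X → Y → ℝ) (f : X → Y) : Prop :=
  ∀ x y, y ≠ f x → p x y = 0

set_option linter.unusedSectionVars false

section AuxIB
open scoped Classical
open Finset Real

section Basic
variable {X Y : Type*} [Fintype X] [Fintype Y] (p : X → Y → ℝ)

lemma margFst_nonneg (hp : ∀ x y, 0 ≤ p x y) (x : X) : 0 ≤ margFst p x :=
  Finset.sum_nonneg fun y _ => hp x y

lemma margSnd_nonneg (hp : ∀ x y, 0 ≤ p x y) (y : Y) : 0 ≤ margSnd p y :=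
  Finset.sum_nonneg fun x _ => hp x y

lemma le_margFst (hp : ∀ x y, 0 ≤ p x y) (x : X) (y : Y) : p x y ≤ margFst p x :=
  Finset.single_le_sum (fun y _ => hp x y) (Finset.mem_univ y)

lemma le_margSnd (hp : ∀ x y, 0 ≤ p x y) (x : X) (y : Y) : p x y ≤ margSnd p y :=
  Finset.single_le_sum (f := fun x => p x y) (fun x _ => hp x y) (Finset.mem_univ x)

lemma sum_margSnd (hp : IsJoint p) : ∑ y, margSnd p y = 1 := by
  rw [← hp.2]; exact Finset.sum_comm

lemma margSnd_le_one (hp : IsJoint p) (y : Y) : margSnd p y ≤ 1 := by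
  rw [← sum_margSnd p hp]
  exact Finset.single_le_sum (fun y _ => margSnd_nonneg p hp.1 y) (Finset.mem_univ y)

lemma ent_margSnd_nonneg (hp : IsJoint p) : 0 ≤ ent (margSnd p) := by
  rw [ent, neg_nonneg]
  apply Finset.sum_nonpos
  intro y _
  rcases eq_or_lt_of_le (margSnd_nonneg p hp.1 y) with h0 | hpos
  · rw [← h0]; simp
  · have := Real.log_nonpos hpos.le (margSnd_le_one p hp y)
    exact mul_nonpos_of_nonneg_of_nonpos hpos.le this

lemma condEnt_nonneg {A B : Type*} [Fintype A] [Fintype B] (q : A → B → ℝ)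
    (hq : ∀ a b, 0 ≤ q a b) : 0 ≤ condEnt q := by
  rw [condEnt, neg_nonneg]
  apply Finset.sum_nonpos
  intro a _
  apply Finset.sum_nonpos
  intro b _
  rcases eq_or_lt_of_le (hq a b) with h0 | hpos
  · rw [← h0]; simp
  · apply mul_nonpos_of_nonneg_of_nonpos hpos.le
    have hm : 0 < margFst q a := lt_of_lt_of_le hpos (le_margFst q hq a b)
    apply Real.log_nonpos (le_of_lt (div_pos hpos hm))
    rw [div_le_one hm]
    exact le_margFst q hq a b

variable (f : X → Y)

lemma determ_pt (hdet : Determ p f) (x : X) (y : Y) :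
    p x y = if f x = y then margFst p x else 0 := by
  by_cases h : f x = y
  · subst h
    rw [if_pos rfl, margFst, Finset.sum_eq_single (f x)]
    · intro y _ hy; exact hdet x y hy
    · simp
  · rw [if_neg h]; exact hdet x y (fun hc => h hc.symm)

lemma margSnd_eq_fiber_sum (hdet : Determ p f) (y : Y) :
    margSnd p y = ∑ x, if f x = y then margFst p x else 0 := by
  rw [margSnd]
  exact Finset.sum_congr rfl fun x _ => determ_pt p f hdet x y

end Basic

section Chan
variable {X Y : Type*} [Fintype X] [Fintype Y] (p : X → Y → ℝ) {n : ℕ} (κ : X → Fin n → ℝ)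

lemma margFst_jointXT (hκ : IsChannel κ) : margFst (jointXT p κ) = margFst p := by
  funext x
  simp only [margFst, jointXT, ← Finset.mul_sum, (hκ x).2, mul_one]

lemma margSnd_jointTY (hκ : IsChannel κ) : margSnd (jointTY p κ) = margSnd p := by
  funext y
  simp only [margSnd, jointTY]
  rw [Finset.sum_comm]
  exact Finset.sum_congr rfl fun x _ => by
    rw [← Finset.mul_sum, (hκ x).2, mul_one]

lemma margFst_jointTY (hκ : IsChannel κ) :
    margFst (jointTY p κ) = margSnd (jointXT p κ) := by
  funext t
  simp only [margFst, margSnd, jointTY, jointXT]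
  rw [Finset.sum_comm]
  exact Finset.sum_congr rfl fun x _ => (Finset.sum_mul ..).symm

end Chan

section DPI
variable {X Y : Type*} [Fintype X] [Fintype Y]

lemma log_sum_ineq {ι : Type*} (s : Finset ι) (a b : ι → ℝ)
    (ha : ∀ i ∈ s, 0 ≤ a i) (hb : ∀ i ∈ s, 0 ≤ b i)
    (hab : ∀ i ∈ s, b i = 0 → a i = 0) :
    (∑ i ∈ s, a i) * Real.log ((∑ i ∈ s, a i) / (∑ i ∈ s, b i)) ≤
      ∑ i ∈ s, a i * Real.log (a i / b i) := by
  set A := ∑ i ∈ s, a i with hA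
  set B := ∑ i ∈ s, b i with hB
  rcases eq_or_lt_of_le (Finset.sum_nonneg ha) with h0 | hApos
  · -- A = 0
    have hall : ∀ i ∈ s, a i = 0 := by
      intro i hi
      exact (Finset.sum_eq_zero_iff_of_nonneg ha).1 h0.symm i hi
    have hA0 : A = 0 := hA.trans h0.symm
    have : ∑ i ∈ s, a i * Real.log (a i / b i) = 0 :=
      Finset.sum_eq_zero fun i hi => by rw [hall i hi, zero_mul]
    simp [hA0, this]
  · have hBpos : 0 < B := by
      rcases eq_or_lt_of_le (Finset.sum_nonneg hb) with h0 | h; swap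
      · exact h
      · exfalso
        have hallb : ∀ i ∈ s, b i = 0 := (Finset.sum_eq_zero_iff_of_nonneg hb).1 h0.symm
        have : A = 0 := Finset.sum_eq_zero fun i hi => hab i hi (hallb i hi)
        exact absurd this (ne_of_gt hApos)
    have key : ∀ i ∈ s, a i * Real.log (A / B) + (a i - b i * (A / B)) ≤
        a i * Real.log (a i / b i) := by
      intro i hi
      rcases eq_or_lt_of_le (ha i hi) with h0 | hapos
      · rw [← h0]
        have : 0 ≤ b i * (A / B) := mul_nonneg (hb i hi) (div_nonneg hApos.le hBpos.le)
        simp; linarith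
      · have hbpos : 0 < b i := by
          rcases eq_or_lt_of_le (hb i hi) with h0 | h
          · exact absurd (hab i hi h0.symm) (ne_of_gt hapos)
          · exact h
        have hx : 0 < b i * A / (a i * B) := by positivity
        have hlog := Real.log_le_sub_one_of_pos hx
        have heq : Real.log (b i * A / (a i * B)) =
            Real.log (A / B) - Real.log (a i / b i) := by
          rw [Real.log_div (by positivity) (by positivity),
            Real.log_div (ne_of_gt hApos) (ne_of_gt hBpos),
            Real.log_div (ne_of_gt hapos) (ne_of_gt hbpos),
            Real.log_mul (ne_of_gt hbpos) (ne_of_gt hApos),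
            Real.log_mul (ne_of_gt hapos) (ne_of_gt hBpos)]
          ring
        rw [heq] at hlog
        have h2 : a i * (Real.log (A / B) - Real.log (a i / b i)) ≤
            a i * (b i * A / (a i * B) - 1) := by
          exact mul_le_mul_of_nonneg_left hlog hapos.le
        have h3 : a i * (b i * A / (a i * B) - 1) = b i * (A/B) - a i := by
          field_simp
        nlinarith [h2, h3]
    calc A * Real.log (A / B) = ∑ i ∈ s, (a i * Real.log (A / B) + (a i - b i * (A/B))) := by
          rw [Finset.sum_add_distrib, Finset.sum_sub_distrib, ← Finset.sum_mul, ← hA,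
            ← Finset.sum_mul, ← hB]
          have : B * (A / B) = A := by field_simp
          linarith
      _ ≤ _ := Finset.sum_le_sum key

lemma mi_TY_le_mi_XT (p : X → Y → ℝ) (f : X → Y) {n : ℕ} (κ : X → Fin n → ℝ)
    (hp : IsJoint p) (hdet : Determ p f) (hκ : IsChannel κ) :
    mi (jointTY p κ) ≤ mi (jointXT p κ) := by
  have hp0 := hp.1
  have hq0 : ∀ x t, 0 ≤ jointXT p κ x t := fun x t =>
    mul_nonneg (margFst_nonneg p hp0 x) ((hκ x).1 t)
  have hr0 : ∀ t y, 0 ≤ jointTY p κ t y := fun t y =>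
    Finset.sum_nonneg fun x _ => mul_nonneg (hp0 x y) ((hκ x).1 t)
  have hmS : margSnd (jointTY p κ) = margSnd p := margSnd_jointTY p κ hκ
  have hmT : margFst (jointTY p κ) = margSnd (jointXT p κ) := margFst_jointTY p κ hκ
  have hmF : margFst (jointXT p κ) = margFst p := margFst_jointXT p κ hκ
  have hwrow : ∀ t, ∑ y, jointTY p κ t y = margSnd (jointXT p κ) t :=
    fun t => congrFun hmT t
  have hwcol : ∀ y, ∑ t, jointTY p κ t y = margSnd p y := fun y => congrFun hmS y
  have hwleτ : ∀ t y, jointTY p κ t y ≤ margSnd (jointXT p κ) t := by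
    intro t y
    rw [← hwrow t]
    exact Finset.single_le_sum (fun y _ => hr0 t y) (Finset.mem_univ y)
  have hwleρ : ∀ t y, jointTY p κ t y ≤ margSnd p y := by
    intro t y
    rw [← hwcol y]
    exact Finset.single_le_sum (f := fun t => jointTY p κ t y) (fun t _ => hr0 t y)
      (Finset.mem_univ t)
  -- Identity A : ∑∑ w log(w/τ) = ∑∑ w log w - ∑ τ log τ
  have idA : ∑ t, ∑ y, jointTY p κ t y * Real.log (jointTY p κ t y / margSnd (jointXT p κ) t)
      = (∑ t, ∑ y, jointTY p κ t y * Real.log (jointTY p κ t y))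
        - ∑ t, margSnd (jointXT p κ) t * Real.log (margSnd (jointXT p κ) t) := by
    rw [← Finset.sum_sub_distrib]
    refine Finset.sum_congr rfl fun t _ => ?_
    have h1 : ∀ y, jointTY p κ t y * Real.log (jointTY p κ t y / margSnd (jointXT p κ) t)
        = jointTY p κ t y * Real.log (jointTY p κ t y)
          - jointTY p κ t y * Real.log (margSnd (jointXT p κ) t) := by
      intro y
      rcases eq_or_lt_of_le (hr0 t y) with h0 | hpos
      · rw [← h0]; simp
      · rw [Real.log_div (ne_of_gt hpos) (ne_of_gt (lt_of_lt_of_le hpos (hwleτ t y)))]; ring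
    rw [Finset.sum_congr rfl (fun y _ => h1 y), Finset.sum_sub_distrib, ← Finset.sum_mul,
      hwrow t]
  -- Identity B : ∑∑ w log(w/ρ) = ∑∑ w log w - ∑ ρ log ρ
  have idB : ∑ t, ∑ y, jointTY p κ t y * Real.log (jointTY p κ t y / margSnd p y)
      = (∑ t, ∑ y, jointTY p κ t y * Real.log (jointTY p κ t y))
        - ∑ y, margSnd p y * Real.log (margSnd p y) := by
    rw [Finset.sum_comm, Finset.sum_comm
      (f := fun t y => jointTY p κ t y * Real.log (jointTY p κ t y)),
      ← Finset.sum_sub_distrib]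
    refine Finset.sum_congr rfl fun y _ => ?_
    have h1 : ∀ t, jointTY p κ t y * Real.log (jointTY p κ t y / margSnd p y)
        = jointTY p κ t y * Real.log (jointTY p κ t y)
          - jointTY p κ t y * Real.log (margSnd p y) := by
      intro t
      rcases eq_or_lt_of_le (hr0 t y) with h0 | hpos
      · rw [← h0]; simp
      · rw [Real.log_div (ne_of_gt hpos) (ne_of_gt (lt_of_lt_of_le hpos (hwleρ t y)))]; ring
    rw [Finset.sum_congr rfl (fun t _ => h1 t), Finset.sum_sub_distrib, ← Finset.sum_mul,
      hwcol y]
  -- key inequality via log-sum over fibers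
  have key : ∑ t, ∑ y, jointTY p κ t y * Real.log (jointTY p κ t y / margSnd p y)
      ≤ ∑ x, ∑ t, jointXT p κ x t * Real.log (jointXT p κ x t / margFst p x) := by
    rw [Finset.sum_comm (f := fun x t => jointXT p κ x t * Real.log (jointXT p κ x t / margFst p x))]
    refine Finset.sum_le_sum fun t _ => ?_
    rw [← Finset.sum_fiberwise (Finset.univ) f
      (fun x => jointXT p κ x t * Real.log (jointXT p κ x t / margFst p x))]
    refine Finset.sum_le_sum fun y _ => ?_
    have hA : ∑ x ∈ Finset.univ.filter (fun x => f x = y), jointXT p κ x t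
        = jointTY p κ t y := by
      rw [Finset.sum_filter]
      show _ = ∑ x, p x y * κ x t
      refine (Finset.sum_congr rfl fun x _ => ?_).symm
      rw [determ_pt p f hdet x y, ite_mul, zero_mul]
      rfl
    have hB : ∑ x ∈ Finset.univ.filter (fun x => f x = y), margFst p x = margSnd p y := by
      rw [Finset.sum_filter, margSnd_eq_fiber_sum p f hdet y]
    have hls := log_sum_ineq (Finset.univ.filter (fun x => f x = y))
      (fun x => jointXT p κ x t) (fun x => margFst p x)
      (fun i _ => hq0 i t) (fun i _ => margFst_nonneg p hp0 i)
      (fun i _ h => by have hh : margFst p i = 0 := h; show margFst p i * κ i t = 0; rw [hh, zero_mul])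
    rw [hA, hB] at hls
    exact hls
  -- assemble
  have e1 : mi (jointTY p κ) = -(∑ y, margSnd p y * Real.log (margSnd p y))
      + ((∑ t, ∑ y, jointTY p κ t y * Real.log (jointTY p κ t y))
        - ∑ t, margSnd (jointXT p κ) t * Real.log (margSnd (jointXT p κ) t)) := by
    rw [mi, hmS, condEnt, hmT, ent, ← idA]
    ring
  have e2 : mi (jointXT p κ) = -(∑ t, margSnd (jointXT p κ) t * Real.log (margSnd (jointXT p κ) t))
      + ∑ x, ∑ t, jointXT p κ x t * Real.log (jointXT p κ x t / margFst p x) := by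
    rw [mi, condEnt, hmF, ent]
    ring
  rw [e1, e2]
  linarith [key, idB]
end DPI

section Construction
variable {X Y : Type*} [Fintype X] [Fintype Y]

lemma erasure_channel (p : X → Y → ℝ) (f : X → Y) (hp : IsJoint p) (hdet : Determ p f)
    (l : ℝ) (hl0 : 0 ≤ l) (hl1 : l ≤ 1) :
    ∃ κ : X → Fin (Fintype.card Y + 1) → ℝ, IsChannel κ ∧
      mi (jointXT p κ) = l * ent (margSnd p) ∧ mi (jointTY p κ) = l * ent (margSnd p) := by
  classical
  set m := Fintype.card Y with hm
  set e : Y ≃ Fin m := Fintype.equivFin Y with he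
  set κ : X → Fin (m + 1) → ℝ := fun x t =>
    l * (if t = (e (f x)).castSucc then 1 else 0)
      + (1 - l) * (if t = Fin.last m then 1 else 0) with hκdef
  have hne : ∀ s : Fin m, s.castSucc ≠ Fin.last m := fun s => (Fin.castSucc_lt_last s).ne
  have hκc : IsChannel κ := by
    intro x
    constructor
    · intro t
      have : (0:ℝ) ≤ l * (if t = (e (f x)).castSucc then 1 else 0) := by positivity
      have h2 : (0:ℝ) ≤ (1 - l) * (if t = Fin.last m then 1 else 0) := by
        apply mul_nonneg (by linarith); positivity
      simp only [hκdef]; linarith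
    · simp only [hκdef]
      rw [Finset.sum_add_distrib, ← Finset.mul_sum, ← Finset.mul_sum,
        Finset.sum_ite_eq' Finset.univ ((e (f x)).castSucc) (fun _ => (1:ℝ)),
        Finset.sum_ite_eq' Finset.univ (Fin.last m) (fun _ => (1:ℝ))]
      simp
  -- values of κ
  have hκcs : ∀ x (s : Fin m), κ x s.castSucc = if s = e (f x) then l else 0 := by
    intro x s
    simp only [hκdef, if_neg (hne s), mul_zero, add_zero, Fin.castSucc_inj]
    split <;> simp
  have hκlast : ∀ x, κ x (Fin.last m) = 1 - l := by
    intro x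
    simp only [hκdef, if_neg (Ne.symm (hne (e (f x)))), if_pos rfl, mul_zero, mul_one, zero_add,
      if_true, mul_zero, zero_add]
  -- marginal of first coordinate
  have hsumπ : ∑ x, margFst p x = 1 := hp.2
  -- τ values
  have hτcs : ∀ s : Fin m, margSnd (jointXT p κ) s.castSucc = l * margSnd p (e.symm s) := by
    intro s
    show ∑ x, (∑ y, p x y) * κ x s.castSucc = _
    rw [margSnd_eq_fiber_sum p f hdet, Finset.mul_sum]
    refine Finset.sum_congr rfl fun x _ => ?_
    rw [hκcs x s]
    by_cases hfx : f x = e.symm s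
    · have hs : s = e (f x) := by rw [hfx]; simp
      rw [if_pos hs, if_pos hfx]
      simp [margFst, mul_comm]
    · have hs : s ≠ e (f x) := fun hc => hfx (by rw [hc]; simp)
      rw [if_neg hs, if_neg hfx]
      simp
  have hτlast : margSnd (jointXT p κ) (Fin.last m) = 1 - l := by
    show ∑ x, (∑ y, p x y) * κ x (Fin.last m) = _
    have : ∀ x, (∑ y, p x y) * κ x (Fin.last m) = margFst p x * (1 - l) := by
      intro x; rw [hκlast x]; rfl
    rw [Finset.sum_congr rfl fun x _ => this x, ← Finset.sum_mul, hsumπ, one_mul]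
  -- entropy of τ = margSnd (jointXT)
  have hentτ : ent (margSnd (jointXT p κ))
      = -(∑ y, l * margSnd p y * Real.log (l * margSnd p y)) - (1 - l) * Real.log (1 - l) := by
    rw [ent, Fin.sum_univ_castSucc, hτlast]
    have h1 : ∀ s : Fin m,
        margSnd (jointXT p κ) s.castSucc * Real.log (margSnd (jointXT p κ) s.castSucc)
        = (fun y => l * margSnd p y * Real.log (l * margSnd p y)) (e.symm s) := by
      intro s; rw [hτcs s]
    rw [Finset.sum_congr rfl fun s _ => h1 s,
      Equiv.sum_comp e.symm (fun y => l * margSnd p y * Real.log (l * margSnd p y))]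
    ring
  -- conditional entropy H(T|X)
  have hcondq : condEnt (jointXT p κ)
      = -(l * Real.log l + (1 - l) * Real.log (1 - l)) := by
    rw [condEnt, margFst_jointXT p κ hκc]
    have hx : ∀ x, ∑ t, jointXT p κ x t * Real.log (jointXT p κ x t / margFst p x)
        = margFst p x * (l * Real.log l + (1 - l) * Real.log (1 - l)) := by
      intro x
      rcases eq_or_lt_of_le (margFst_nonneg p hp.1 x) with h0 | hπpos
      · have hz : ∀ t, jointXT p κ x t = 0 := by
          intro t
          show margFst p x * κ x t = 0
          rw [← h0, zero_mul]
        rw [Finset.sum_congr rfl fun t _ => by rw [hz t, zero_mul], ← h0]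
        simp
      · have hne0 := ne_of_gt hπpos
        have hlog : ∀ t, Real.log (margFst p x * κ x t / margFst p x) = Real.log (κ x t) :=
          fun t => by rw [mul_div_cancel_left₀ _ hne0]
        have h2 : ∀ t, jointXT p κ x t * Real.log (jointXT p κ x t / margFst p x)
            = margFst p x * (κ x t * Real.log (κ x t)) := by
          intro t
          show margFst p x * κ x t * Real.log (margFst p x * κ x t / margFst p x) = _
          rw [hlog t]; ring
        rw [Finset.sum_congr rfl fun t _ => h2 t, ← Finset.mul_sum]
        congr 1
        rw [Fin.sum_univ_castSucc, hκlast x]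
        have hcs : ∀ s : Fin m, κ x s.castSucc * Real.log (κ x s.castSucc)
            = if s = e (f x) then l * Real.log l else 0 := by
          intro s; rw [hκcs x s]; split <;> simp
        rw [Finset.sum_congr rfl fun s _ => hcs s,
          Finset.sum_ite_eq' Finset.univ (e (f x)) (fun _ => l * Real.log l),
          if_pos (Finset.mem_univ _)]
    rw [Finset.sum_congr rfl fun x _ => hx x, ← Finset.sum_mul, hsumπ, one_mul]
  -- mutual information I(X;T) = l H(Y)
  have hmiq : mi (jointXT p κ) = l * ent (margSnd p) := by
    rw [mi, hentτ, hcondq, ent]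
    have hsplit : ∑ y, l * margSnd p y * Real.log (l * margSnd p y)
        = l * Real.log l + l * ∑ y, margSnd p y * Real.log (margSnd p y) := by
      rcases eq_or_lt_of_le hl0 with h0 | hlpos
      · rw [← h0]; simp
      · have h3 : ∀ y, l * margSnd p y * Real.log (l * margSnd p y)
            = (margSnd p y * (l * Real.log l)) + l * (margSnd p y * Real.log (margSnd p y)) := by
          intro y
          rcases eq_or_lt_of_le (margSnd_nonneg p hp.1 y) with h0 | hρpos
          · rw [← h0]; simp
          · rw [Real.log_mul (ne_of_gt hlpos) (ne_of_gt hρpos)]; ring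
        rw [Finset.sum_congr rfl fun y _ => h3 y, Finset.sum_add_distrib,
          ← Finset.sum_mul, ← Finset.mul_sum, sum_margSnd p hp, one_mul]
    rw [hsplit]; ring
  -- values of jointTY
  have hwcs : ∀ (s : Fin m) (y : Y), jointTY p κ s.castSucc y
      = if s = e y then l * margSnd p y else 0 := by
    intro s y
    show ∑ x, p x y * κ x s.castSucc = _
    have h4 : ∀ x, p x y * κ x s.castSucc
        = if s = e y then l * (if f x = y then margFst p x else 0) else 0 := by
      intro x
      rw [determ_pt p f hdet x y, hκcs x s]
      by_cases hxy : f x = y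
      · simp only [hxy, if_pos rfl]
        by_cases hs : s = e y <;> simp [hs, mul_comm]
      · rw [if_neg hxy]
        simp
    rw [Finset.sum_congr rfl fun x _ => h4 x]
    by_cases hs : s = e y
    · simp only [if_pos hs]
      rw [← Finset.mul_sum, ← margSnd_eq_fiber_sum p f hdet y]
    · simp only [if_neg hs]
      simp
  have hwlast : ∀ y, jointTY p κ (Fin.last m) y = (1 - l) * margSnd p y := by
    intro y
    show ∑ x, p x y * κ x (Fin.last m) = _
    rw [Finset.sum_congr rfl fun x _ => by rw [hκlast x], ← Finset.sum_mul]
    show margSnd p y * (1 - l) = _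
    ring
  -- conditional entropy H(Y|T)
  have hcondw : condEnt (jointTY p κ) = (1 - l) * ent (margSnd p) := by
    rw [condEnt, margFst_jointTY p κ hκc, Fin.sum_univ_castSucc, ent]
    have hzero : ∀ s : Fin m, ∑ y, jointTY p κ s.castSucc y *
        Real.log (jointTY p κ s.castSucc y / margSnd (jointXT p κ) s.castSucc) = 0 := by
      intro s
      refine Finset.sum_eq_zero fun y _ => ?_
      rw [hwcs s y, hτcs s]
      by_cases hs : s = e y
      · rw [if_pos hs, hs]
        simp only [Equiv.symm_apply_apply]
        rcases eq_or_lt_of_le (mul_nonneg hl0 (margSnd_nonneg p hp.1 y)) with h0 | hpos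
        · rw [← h0]; simp
        · rw [div_self (ne_of_gt hpos), Real.log_one, mul_zero]
      · rw [if_neg hs, zero_mul]
    rw [Finset.sum_congr rfl fun s _ => hzero s, Finset.sum_const_zero, zero_add, hτlast]
    have hlast : ∀ y, jointTY p κ (Fin.last m) y *
        Real.log (jointTY p κ (Fin.last m) y / (1 - l))
        = (1 - l) * (margSnd p y * Real.log (margSnd p y)) := by
      intro y
      rw [hwlast y]
      rcases eq_or_lt_of_le (sub_nonneg.2 hl1) with h0 | hpos
      · rw [← h0]; simp
      · rw [mul_div_cancel_left₀ _ (ne_of_gt hpos)]; ring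
    rw [Finset.sum_congr rfl fun y _ => hlast y, ← Finset.mul_sum]
    ring
  have hmiw : mi (jointTY p κ) = l * ent (margSnd p) := by
    rw [mi, margSnd_jointTY p κ hκc, hcondw]
    ring
  exact ⟨κ, hκc, hmiq, hmiw⟩
end Construction
end AuxIB

theorem IBcurve_deterministic_piecewise_linear {X Y : Type*} [Fintype X] [Fintype Y]
    (p : X → Y → ℝ) (f : X → Y)
    (hp : IsJoint p) (hdet : Determ p f) :
    ∀ r ≥ (0:ℝ), IBcurve p r = min r (ent (margSnd p)) := by
  classical
  intro r hr
  have hH0 : 0 ≤ ent (margSnd p) := ent_margSnd_nonneg p hp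
  set H := ent (margSnd p) with hH
  set S := { v : ℝ | ∃ (n : ℕ) (κ : X → Fin n → ℝ), IsChannel κ ∧
    mi (jointXT p κ) ≤ r ∧ v = mi (jointTY p κ) } with hS
  have hub : ∀ v ∈ S, v ≤ min r H := by
    rintro v ⟨n, κ, hκ, hle, rfl⟩
    refine le_min (le_trans (mi_TY_le_mi_XT p f κ hp hdet hκ) hle) ?_
    rw [mi, margSnd_jointTY p κ hκ]
    have hc := condEnt_nonneg (jointTY p κ) (fun t y =>
      Finset.sum_nonneg fun x _ => mul_nonneg (hp.1 x y) ((hκ x).1 t))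
    rw [← hH]
    linarith
  obtain ⟨l, hl0, hl1, hlH⟩ : ∃ l : ℝ, 0 ≤ l ∧ l ≤ 1 ∧ l * H = min r H := by
    by_cases h : H = 0
    · refine ⟨0, le_refl _, zero_le_one, ?_⟩
      rw [h, mul_zero, min_eq_right (h ▸ hr)]
    · have hHpos : 0 < H := lt_of_le_of_ne hH0 (Ne.symm h)
      refine ⟨min r H / H, div_nonneg (le_min hr hH0) hHpos.le, ?_, ?_⟩
      · rw [div_le_one hHpos]
        exact min_le_right r H
      · rw [div_mul_cancel₀ _ (ne_of_gt hHpos)]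
  obtain ⟨κ, hκc, hmiq, hmiw⟩ := erasure_channel p f hp hdet l hl0 hl1
  have hmem : min r H ∈ S :=
    ⟨Fintype.card Y + 1, κ, hκc, by rw [hmiq, hlH]; exact min_le_left r H,
      by rw [hmiw, hlH]⟩
  rw [IBcurve, ← hS]
  exact le_antisymm (csSup_le ⟨min r H, hmem⟩ hub) (le_csSup ⟨min r H, hub⟩ hmem)
end
end

section
/- Let F : [0,∞) → ℝ be any function, let β > 0, and suppose r* > 0 maximizes r ↦ F(r) − β·r over [0,∞). Then r* also maximizes r ↦ F(r) − (β/(2r*))·r² over [0,∞). -/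
/-! With `c = β / (2 r*)` we have `F r - c r² = (F r - β r) + (β r - c r²)`, and the second summand
`β r - c r² = c r*² - c (r - r*)²` is a downward parabola with vertex at `r*`. Both summands are
therefore maximized at `r*`. -/

open Set

lemma isMaxOn_mul_sub_div_mul_sq {β a : ℝ} (hβ : 0 ≤ β) (ha : 0 < a) :
    IsMaxOn (fun r => β * r - β / (2 * a) * r ^ 2) univ a := by
  refine isMaxOn_iff.mpr fun r _ => ?_
  have hc : 0 ≤ β / (2 * a) := by positivity
  have hvertex : ∀ x, β * x - β / (2 * a) * x ^ 2 = β / (2 * a) * (a ^ 2 - (x - a) ^ 2) := by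
    intro x
    field_simp
    ring
  rw [hvertex, hvertex, sub_self]
  linarith [mul_nonneg hc (sq_nonneg (r - a))]

/-- Let `F : [0,∞) → ℝ` be any function (e.g. the IB curve), `β > 0`, and
suppose `r* > 0` maximizes `r ↦ F(r) - β r` over `[0,∞)`.  Then `r*` also maximizes the
squared-IB objective `r ↦ F(r) - (β/(2r*)) r²` over `[0,∞)`. -/
theorem IB_maximizer_is_squaredIB_maximizer (F : ℝ → ℝ) (β rstar : ℝ)
    (hβ : 0 < β) (hrstar : 0 < rstar)
    (hmax : ∀ r, 0 ≤ r → F r - β * r ≤ F rstar - β * rstar) :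
    ∀ r, 0 ≤ r → F r - (β / (2 * rstar)) * r ^ 2 ≤
      F rstar - (β / (2 * rstar)) * rstar ^ 2 := by
  have hIB : IsMaxOn (fun r => F r - β * r) (Ici 0) rstar := fun r hr => hmax r hr
  have hsum := hIB.add ((isMaxOn_mul_sub_div_mul_sq hβ.le hrstar).on_subset (subset_univ _))
  intro r hr
  linarith [isMaxOn_iff.mp hsum r hr]
end
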